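/- Let Σ be an N×N real positive definite matrix, Λ an N×r real matrix of full column rank, and F a T×r real matrix with FᵀF invertible; set M_F = I_T − F(FᵀF)⁻¹Fᵀ, A_F = [Σ⁻¹ − Σ⁻¹Λ(ΛᵀΣ⁻¹Λ)⁻¹ΛᵀΣ⁻¹] ⊗ M_F, and G = [I_N − Λ(ΛᵀΛ)⁻¹Λᵀ] ⊗ M_F, where ⊗ denotes the Kronecker product. Let Z be an (N·T)×d real matrix such that ZᵀGZ and ZᵀA_FZ are invertible. Then the d×d matrix (ZᵀGZ)⁻¹ Zᵀ G (Σ ⊗ I_T) G Z (ZᵀGZ)⁻¹ − (Zᵀ A_F Z)⁻¹ is positive semidefinite. -/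

import Mathlib

open Matrix
open scoped Kronecker

/-!
Put `W = Σ ⊗ I`, `M_Λ = I - Λ(ΛᵀΛ)⁻¹Λᵀ` and `B = Σ⁻¹ - Σ⁻¹Λ(ΛᵀΣ⁻¹Λ)⁻¹ΛᵀΣ⁻¹`, so that
`G = M_Λ ⊗ M_F` and `A_F = B ⊗ M_F`. Since `B = Σ⁻¹(I - Q)` for the oblique projection
`Q = Λ(ΛᵀΣ⁻¹Λ)⁻¹ΛᵀΣ⁻¹` onto the columns of `Λ`, which `M_Λ` annihilates, `M_Λ Σ B = M_Λ` and
`B Σ B = B`; with `M_F² = M_F` this gives `G W A_F = G` and `A_F W A_F = A_F`. For `S = ZᵀGZ` and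
`V = ZᵀA_F Z`, expanding then shows that the difference of the two covariances is exactly
`Eᵀ W E` with `E = G Z S⁻¹ - A_F Z V⁻¹`, a congruence of the positive semidefinite `W`.
-/

namespace Matrix

variable {m n R : Type*}

theorem IsSymm.kronecker [CommMagma R] {x : Matrix m m R} {y : Matrix n n R}
    (hx : x.IsSymm) (hy : y.IsSymm) : (x ⊗ₖ y).IsSymm := by
  rw [IsSymm, ← kroneckerMap_transpose, hx.eq, hy.eq]

variable [Fintype m] [DecidableEq m]

theorem nonsing_inv_mul_mul_nonsing_inv [CommRing R] (A : Matrix m m R) :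
    A⁻¹ * A * A⁻¹ = A⁻¹ := by
  rcases A.nonsing_inv_cancel_or_zero with ⟨h, -⟩ | h
  · rw [h, one_mul]
  · rw [h, zero_mul, zero_mul]

variable [Fintype n]

theorem isUnit_det_transpose_mul_self_of_rank_eq {K : Type*} [Field K] [LinearOrder K]
    [IsStrictOrderedRing K] {X : Matrix n m K} (hX : X.rank = Fintype.card m) :
    IsUnit (Xᵀ * X).det := by
  rw [← isUnit_iff_isUnit_det, ← mulVec_surjective_iff_isUnit, ← coe_mulVecLin,
    ← LinearMap.range_eq_top]
  refine Submodule.eq_top_of_finrank_eq ?_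
  rw [Module.finrank_fintype_fun_eq_card, ← hX]
  exact rank_transpose_mul_self X

section Projection

variable [CommRing R] (X : Matrix n m R) (Y : Matrix m n R)

theorem isIdempotentElem_mul_nonsing_inv_mul : IsIdempotentElem (X * (Y * X)⁻¹ * Y) := by
  calc X * (Y * X)⁻¹ * Y * (X * (Y * X)⁻¹ * Y)
      = X * ((Y * X)⁻¹ * (Y * X) * (Y * X)⁻¹) * Y := by simp only [Matrix.mul_assoc]
    _ = X * (Y * X)⁻¹ * Y := by rw [nonsing_inv_mul_mul_nonsing_inv, Matrix.mul_assoc]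

theorem mul_nonsing_inv_mul_mul_cancel {p : Type*} [Fintype p] (h : IsUnit (Y * X).det)
    (C : Matrix m p R) : X * (Y * X)⁻¹ * Y * (X * C) = X * C := by
  rw [Matrix.mul_assoc, ← Matrix.mul_assoc Y, Matrix.mul_assoc X, ← Matrix.mul_assoc (Y * X)⁻¹,
    nonsing_inv_mul _ h, Matrix.one_mul]

end Projection

section Sandwich

variable [CommRing R] [StarRing R] {W G A : Matrix n n R}

theorem sandwich_sub_inv_eq_conjTranspose_mul_mul (hW : W.IsHermitian) (hG : G.IsHermitian)
    (hA : A.IsHermitian) (hGWA : G * W * A = G) (hAWA : A * W * A = A) (Z : Matrix n m R)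
    (hS : IsUnit (Zᴴ * G * Z).det) :
    (Zᴴ * G * Z)⁻¹ * (Zᴴ * G * W * G * Z) * (Zᴴ * G * Z)⁻¹ - (Zᴴ * A * Z)⁻¹ =
      (G * Z * (Zᴴ * G * Z)⁻¹ - A * Z * (Zᴴ * A * Z)⁻¹)ᴴ * W *
        (G * Z * (Zᴴ * G * Z)⁻¹ - A * Z * (Zᴴ * A * Z)⁻¹) := by
  set S := Zᴴ * G * Z with hS_def
  set V := Zᴴ * A * Z with hV_def
  have hAWG : A * W * G = G := by
    simpa only [conjTranspose_mul, hW.eq, hG.eq, hA.eq, Matrix.mul_assoc] using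
      congrArg conjTranspose hGWA
  have hSinv : (S⁻¹)ᴴ = S⁻¹ := by
    rw [conjTranspose_nonsing_inv, (isHermitian_conjTranspose_mul_mul Z hG).eq]
  have hVinv : (V⁻¹)ᴴ = V⁻¹ := by
    rw [conjTranspose_nonsing_inv, (isHermitian_conjTranspose_mul_mul Z hA).eq]
  have hGWA' : ∀ X : Matrix n m R, G * (W * (A * X)) = G * X := fun X => by
    rw [← Matrix.mul_assoc, ← Matrix.mul_assoc, hGWA]
  have hAWG' : ∀ X : Matrix n m R, A * (W * (G * X)) = G * X := fun X => by
    rw [← Matrix.mul_assoc, ← Matrix.mul_assoc, hAWG]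
  have hAWA' : ∀ X : Matrix n m R, A * (W * (A * X)) = A * X := fun X => by
    rw [← Matrix.mul_assoc, ← Matrix.mul_assoc, hAWA]
  have hSV : S⁻¹ * (Zᴴ * (G * (Z * V⁻¹))) = V⁻¹ := by
    simp only [← Matrix.mul_assoc, ← hS_def, nonsing_inv_mul _ hS, Matrix.one_mul]
  have hVS : V⁻¹ * (Zᴴ * (G * (Z * S⁻¹))) = V⁻¹ := by
    simp only [← Matrix.mul_assoc, ← hS_def]
    rw [Matrix.mul_assoc, mul_nonsing_inv _ hS, Matrix.mul_one]
  have hVV : V⁻¹ * (Zᴴ * (A * (Z * V⁻¹))) = V⁻¹ := by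
    simp only [← Matrix.mul_assoc, ← hV_def, nonsing_inv_mul_mul_nonsing_inv]
  simp only [conjTranspose_sub, conjTranspose_mul, hSinv, hVinv, hG.eq, hA.eq, Matrix.sub_mul,
    Matrix.mul_sub, Matrix.mul_assoc, hGWA', hAWG', hAWA', hSV, hVS, hVV]
  abel

theorem posSemidef_sandwich_sub_inv [PartialOrder R] (hW : W.PosSemidef) (hG : G.IsHermitian)
    (hA : A.IsHermitian) (hGWA : G * W * A = G) (hAWA : A * W * A = A) (Z : Matrix n m R)
    (hS : IsUnit (Zᴴ * G * Z).det) :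
    ((Zᴴ * G * Z)⁻¹ * (Zᴴ * G * W * G * Z) * (Zᴴ * G * Z)⁻¹ - (Zᴴ * A * Z)⁻¹).PosSemidef := by
  rw [sandwich_sub_inv_eq_conjTranspose_mul_mul hW.isHermitian hG hA hGWA hAWA Z hS]
  exact hW.conjTranspose_mul_mul_same _

end Sandwich

section ResidualMaker

variable [CommRing R] (X : Matrix n m R)

noncomputable def weightedResidualMaker (W : Matrix n n R) : Matrix n n R :=
  W - W * X * (Xᵀ * W * X)⁻¹ * Xᵀ * W

theorem IsSymm.weightedResidualMaker {W : Matrix n n R} (hW : W.IsSymm) :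
    (weightedResidualMaker X W).IsSymm := by
  simp [Matrix.weightedResidualMaker, IsSymm, transpose_sub, transpose_mul,
    transpose_nonsing_inv, hW.eq, Matrix.mul_assoc]

variable [DecidableEq n]

noncomputable def residualMaker : Matrix n n R := 1 - X * (Xᵀ * X)⁻¹ * Xᵀ

theorem isSymm_residualMaker : (residualMaker X).IsSymm := by
  simp [residualMaker, IsSymm, transpose_sub, transpose_mul, transpose_nonsing_inv,
    Matrix.mul_assoc]

theorem isIdempotentElem_residualMaker : IsIdempotentElem (residualMaker X) :=
  (isIdempotentElem_mul_nonsing_inv_mul X Xᵀ).one_sub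

theorem weightedResidualMaker_eq_mul (W : Matrix n n R) :
    weightedResidualMaker X W = W * (1 - X * (Xᵀ * W * X)⁻¹ * (Xᵀ * W)) := by
  simp only [weightedResidualMaker, Matrix.mul_sub, Matrix.mul_one, Matrix.mul_assoc]

variable {S : Matrix n n R}

theorem residualMaker_mul_mul_weightedResidualMaker_inv (hS : IsUnit S.det)
    (hX : IsUnit (Xᵀ * X).det) :
    residualMaker X * S * weightedResidualMaker X S⁻¹ = residualMaker X := by
  rw [weightedResidualMaker_eq_mul, ← Matrix.mul_assoc, Matrix.mul_assoc _ S,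
    mul_nonsing_inv _ hS, Matrix.mul_one, residualMaker, Matrix.sub_mul, Matrix.one_mul,
    Matrix.mul_sub, Matrix.mul_one, Matrix.mul_assoc X _ (Xᵀ * S⁻¹),
    mul_nonsing_inv_mul_mul_cancel X Xᵀ hX]
  abel

theorem weightedResidualMaker_inv_mul_mul_self (hS : IsUnit S.det) :
    weightedResidualMaker X S⁻¹ * S * weightedResidualMaker X S⁻¹ =
      weightedResidualMaker X S⁻¹ := by
  rw [weightedResidualMaker_eq_mul, Matrix.mul_assoc _ S, ← Matrix.mul_assoc S,
    mul_nonsing_inv _ hS, Matrix.one_mul, Matrix.mul_assoc,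
    (isIdempotentElem_mul_nonsing_inv_mul X (Xᵀ * S⁻¹)).one_sub.eq]

end ResidualMaker

end Matrix

theorem stmt6_general (N r T d : ℕ) (Sig : Matrix (Fin N) (Fin N) ℝ) (hSig : Sig.PosDef)
    (Λ : Matrix (Fin N) (Fin r) ℝ) (hΛ : Λ.rank = r)
    (F : Matrix (Fin T) (Fin r) ℝ)
    (Z : Matrix (Fin N × Fin T) (Fin d) ℝ)
    (hG : IsUnit (Zᵀ * (((1 : Matrix (Fin N) (Fin N) ℝ) - Λ * (Λᵀ * Λ)⁻¹ * Λᵀ) ⊗ₖ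
        ((1 : Matrix (Fin T) (Fin T) ℝ) - F * (Fᵀ * F)⁻¹ * Fᵀ)) * Z).det) :
    ((Zᵀ * (((1 : Matrix (Fin N) (Fin N) ℝ) - Λ * (Λᵀ * Λ)⁻¹ * Λᵀ) ⊗ₖ
          ((1 : Matrix (Fin T) (Fin T) ℝ) - F * (Fᵀ * F)⁻¹ * Fᵀ)) * Z)⁻¹
      * (Zᵀ * (((1 : Matrix (Fin N) (Fin N) ℝ) - Λ * (Λᵀ * Λ)⁻¹ * Λᵀ) ⊗ₖ
          ((1 : Matrix (Fin T) (Fin T) ℝ) - F * (Fᵀ * F)⁻¹ * Fᵀ))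
          * (Sig ⊗ₖ (1 : Matrix (Fin T) (Fin T) ℝ))
          * (((1 : Matrix (Fin N) (Fin N) ℝ) - Λ * (Λᵀ * Λ)⁻¹ * Λᵀ) ⊗ₖ
          ((1 : Matrix (Fin T) (Fin T) ℝ) - F * (Fᵀ * F)⁻¹ * Fᵀ)) * Z)
      * (Zᵀ * (((1 : Matrix (Fin N) (Fin N) ℝ) - Λ * (Λᵀ * Λ)⁻¹ * Λᵀ) ⊗ₖ
          ((1 : Matrix (Fin T) (Fin T) ℝ) - F * (Fᵀ * F)⁻¹ * Fᵀ)) * Z)⁻¹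
      - (Zᵀ * ((Sig⁻¹ - Sig⁻¹ * Λ * (Λᵀ * Sig⁻¹ * Λ)⁻¹ * Λᵀ * Sig⁻¹) ⊗ₖ
          ((1 : Matrix (Fin T) (Fin T) ℝ) - F * (Fᵀ * F)⁻¹ * Fᵀ)) * Z)⁻¹).PosSemidef := by
  have hSig_det : IsUnit Sig.det := (isUnit_iff_isUnit_det Sig).mp hSig.isUnit
  have hΛ_det : IsUnit (Λᵀ * Λ).det :=
    isUnit_det_transpose_mul_self_of_rank_eq (by rwa [Fintype.card_fin])
  have hM := (isIdempotentElem_residualMaker F).eq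
  have hGWA : (residualMaker Λ ⊗ₖ residualMaker F) * (Sig ⊗ₖ 1) *
      (weightedResidualMaker Λ Sig⁻¹ ⊗ₖ residualMaker F) = residualMaker Λ ⊗ₖ residualMaker F := by
    rw [← mul_kronecker_mul, ← mul_kronecker_mul, Matrix.mul_one, hM,
      residualMaker_mul_mul_weightedResidualMaker_inv Λ hSig_det hΛ_det]
  have hAWA : (weightedResidualMaker Λ Sig⁻¹ ⊗ₖ residualMaker F) * (Sig ⊗ₖ 1) *
      (weightedResidualMaker Λ Sig⁻¹ ⊗ₖ residualMaker F) =
        weightedResidualMaker Λ Sig⁻¹ ⊗ₖ residualMaker F := by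
    rw [← mul_kronecker_mul, ← mul_kronecker_mul, Matrix.mul_one, hM,
      weightedResidualMaker_inv_mul_mul_self Λ hSig_det]
  have hSigInv_symm : Sig⁻¹.IsSymm := isHermitian_iff_isSymm.mp hSig.isHermitian.inv
  have key := posSemidef_sandwich_sub_inv (hSig.posSemidef.kronecker PosSemidef.one)
    (isHermitian_iff_isSymm.mpr ((isSymm_residualMaker Λ).kronecker (isSymm_residualMaker F)))
    (isHermitian_iff_isSymm.mpr ((hSigInv_symm.weightedResidualMaker Λ).kronecker
      (isSymm_residualMaker F)))
    hGWA hAWA Z (by rw [conjTranspose_eq_transpose_of_trivial]; exact hG)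
  simp only [conjTranspose_eq_transpose_of_trivial] at key
  exact key

/-- Relative efficiency: the sandwich covariance of the regular PC estimator dominates the
asymptotic covariance `(Zᵀ A_F Z)⁻¹` of the WPC estimator. -/
theorem stmt6 (N r T d : ℕ) (Sig : Matrix (Fin N) (Fin N) ℝ) (hSig : Sig.PosDef)
    (Λ : Matrix (Fin N) (Fin r) ℝ) (hΛ : Λ.rank = r)
    (F : Matrix (Fin T) (Fin r) ℝ) (hF : IsUnit (Fᵀ * F).det)
    (Z : Matrix (Fin N × Fin T) (Fin d) ℝ)
    (hG : IsUnit (Zᵀ * (((1 : Matrix (Fin N) (Fin N) ℝ) - Λ * (Λᵀ * Λ)⁻¹ * Λᵀ) ⊗ₖ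
        ((1 : Matrix (Fin T) (Fin T) ℝ) - F * (Fᵀ * F)⁻¹ * Fᵀ)) * Z).det)
    (hA : IsUnit (Zᵀ * ((Sig⁻¹ - Sig⁻¹ * Λ * (Λᵀ * Sig⁻¹ * Λ)⁻¹ * Λᵀ * Sig⁻¹) ⊗ₖ
        ((1 : Matrix (Fin T) (Fin T) ℝ) - F * (Fᵀ * F)⁻¹ * Fᵀ)) * Z).det) :
    ((Zᵀ * (((1 : Matrix (Fin N) (Fin N) ℝ) - Λ * (Λᵀ * Λ)⁻¹ * Λᵀ) ⊗ₖ
          ((1 : Matrix (Fin T) (Fin T) ℝ) - F * (Fᵀ * F)⁻¹ * Fᵀ)) * Z)⁻¹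
      * (Zᵀ * (((1 : Matrix (Fin N) (Fin N) ℝ) - Λ * (Λᵀ * Λ)⁻¹ * Λᵀ) ⊗ₖ
          ((1 : Matrix (Fin T) (Fin T) ℝ) - F * (Fᵀ * F)⁻¹ * Fᵀ))
          * (Sig ⊗ₖ (1 : Matrix (Fin T) (Fin T) ℝ))
          * (((1 : Matrix (Fin N) (Fin N) ℝ) - Λ * (Λᵀ * Λ)⁻¹ * Λᵀ) ⊗ₖ
          ((1 : Matrix (Fin T) (Fin T) ℝ) - F * (Fᵀ * F)⁻¹ * Fᵀ)) * Z)
      * (Zᵀ * (((1 : Matrix (Fin N) (Fin N) ℝ) - Λ * (Λᵀ * Λ)⁻¹ * Λᵀ) ⊗ₖ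
          ((1 : Matrix (Fin T) (Fin T) ℝ) - F * (Fᵀ * F)⁻¹ * Fᵀ)) * Z)⁻¹
      - (Zᵀ * ((Sig⁻¹ - Sig⁻¹ * Λ * (Λᵀ * Sig⁻¹ * Λ)⁻¹ * Λᵀ * Sig⁻¹) ⊗ₖ
          ((1 : Matrix (Fin T) (Fin T) ℝ) - F * (Fᵀ * F)⁻¹ * Fᵀ)) * Z)⁻¹).PosSemidef :=
  stmt6_general N r T d Sig hSig Λ hΛ F Z hG
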